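/- arXiv:1001.2140 — 6 statements merged into one kernel-verified Lean document; each statement's English description precedes it below -/
import Mathlib

section
/- For every choice of the Boolean function g, the function f is balanced: if x is uniformly distributed on {0,1}^n, then f(x) is uniformly distributed on {0,1}^D, i.e. Pr[f(x) = a] = 2^{-D} for every a ∈ {0,1}^D. -/
/-- The NLHB function `f : {0,1}^n → {0,1}^{n-p}`, defined coordinatewise by
`f(x)_i = x_i + g(x_{i+1}, …, x_{i+p})` (indices 0-based), addition over `GF(2)`. -/
def nlhbF (p n : ℕ) (g : (Fin p → ZMod 2) → ZMod 2)
    (x : Fin n → ZMod 2) : Fin (n - p) → ZMod 2 :=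
  fun i => x ⟨i.val, by have := i.isLt; omega⟩ +
    g (fun j => x ⟨i.val + 1 + j.val, by have := i.isLt; have := j.isLt; omega⟩)

/-!
Knowing `f x` and the last `p` coordinates of `x` determines `x`: going downwards from
`i = D - 1`, `x_i = f(x)_i + g(x_{i+1}, …, x_{i+p})` and the window lies strictly above `i`.
So `x ↦ (f x, last p coordinates)` is injective between sets of equal size `2^n = 2^D · 2^p`,
hence bijective, and every fibre of `f` has exactly `2^p` points.
-/

theorem PMF.map_uniformOfFintype_apply {α β : Type*} [Fintype α] [Nonempty α] (f : α → β)
    (b : β) [Fintype {x // f x = b}] :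
    (uniformOfFintype α).map f b = Fintype.card {x // f x = b} / Fintype.card α := by
  rw [← toOuterMeasure_apply_singleton, toOuterMeasure_map_apply]
  exact @toOuterMeasure_uniformOfFintype_apply _ _ _ (f ⁻¹' {b}) ‹Fintype {x // f x = b}›

section
variable {p n : ℕ} (g : (Fin p → ZMod 2) → ZMod 2)

def nlhbFWithTail (hpn : p ≤ n) (x : Fin n → ZMod 2) :
    (Fin (n - p) → ZMod 2) × (Fin p → ZMod 2) :=
  (nlhbF p n g x, fun k => x ⟨n - p + k, by omega⟩)

theorem nlhbFWithTail_injective (hpn : p ≤ n) : Function.Injective (nlhbFWithTail g hpn) := by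
  intro x y hxy
  obtain ⟨hf, htail⟩ := Prod.ext_iff.1 hxy
  funext i
  induction i using WellFoundedGT.induction with
  | _ i ih =>
  by_cases hi : i.val < n - p
  · have hi' := congrFun hf ⟨i, hi⟩
    have hwindow : (fun j : Fin p => x ⟨i + 1 + j, by omega⟩) =
        fun j : Fin p => y ⟨i + 1 + j, by omega⟩ :=
      funext fun j => ih _ (Fin.mk_lt_mk.2 (by omega))
    simp only [nlhbFWithTail, nlhbF] at hi'
    rw [hwindow] at hi'
    exact add_right_cancel hi'
  · have hi' := congrFun htail ⟨i - (n - p), by omega⟩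
    simpa [nlhbFWithTail, Nat.add_sub_cancel' (not_lt.1 hi)] using hi'

theorem nlhbFWithTail_bijective (hpn : p ≤ n) : Function.Bijective (nlhbFWithTail g hpn) := by
  refine (Fintype.bijective_iff_injective_and_card _).2 ⟨nlhbFWithTail_injective g hpn, ?_⟩
  simp only [Fintype.card_prod, Fintype.card_fun, ZMod.card, Fintype.card_fin, ← pow_add]
  congr 1; omega

theorem card_nlhbF_fiber (hpn : p ≤ n) (a : Fin (n - p) → ZMod 2) :
    Fintype.card {x // nlhbF p n g x = a} = 2 ^ p := by
  have hbij :
      Function.Bijective fun x : {x // nlhbF p n g x = a} => (nlhbFWithTail g hpn x).2 := by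
    refine ⟨fun x y hxy => Subtype.ext ?_, fun t => ?_⟩
    · exact nlhbFWithTail_injective g hpn (Prod.ext (x.2.trans y.2.symm) hxy)
    · obtain ⟨x, hx⟩ := (nlhbFWithTail_bijective g hpn).2 (a, t)
      exact ⟨⟨x, congrArg Prod.fst hx⟩, congrArg Prod.snd hx⟩
  rw [Fintype.card_of_bijective hbij]
  simp [ZMod.card]
end

theorem nlhb_output_uniform_general (p n : ℕ) (hpn : p < n)
    (g : (Fin p → ZMod 2) → ZMod 2) (a : Fin (n - p) → ZMod 2) :
    (PMF.map (nlhbF p n g) (PMF.uniformOfFintype (Fin n → ZMod 2))) a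
      = ((2 : ENNReal) ^ (n - p))⁻¹ := by
  rw [PMF.map_uniformOfFintype_apply, card_nlhbF_fiber g hpn.le]
  simp only [Fintype.card_fun, ZMod.card, Fintype.card_fin, Nat.cast_pow, Nat.cast_ofNat]
  rw [← Nat.sub_add_cancel hpn.le, pow_add, Nat.add_sub_cancel]
  simpa using ENNReal.mul_div_mul_right 1 (2 ^ (n - p)) (c := 2 ^ p) (by simp) (by simp)

/-- For every `g`, if `x` is uniform on `{0,1}^n` then `f(x)` is uniform on
`{0,1}^D`, i.e. `Pr[f(x) = a] = 2^{-D}` for every `a`. -/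
theorem nlhb_output_uniform (p n : ℕ) (hp : 1 ≤ p) (hpn : p < n)
    (g : (Fin p → ZMod 2) → ZMod 2) (a : Fin (n - p) → ZMod 2) :
    (PMF.map (nlhbF p n g) (PMF.uniformOfFintype (Fin n → ZMod 2))) a
      = ((2 : ENNReal) ^ (n - p))⁻¹ :=
  nlhb_output_uniform_general p n hpn g a
end

section
/- Let x be uniformly distributed on {0,1}^n and write y = f(x). For every i with 2 ≤ i ≤ D and every a = (a_1, …, a_i) ∈ {0,1}^i, the probability that the last i bits of y equal a satisfies the recursion Pr[(y_{D−i+1}, …, y_D) = (a_1, …, a_i)] = (1/2) · Pr[(y_{D−i+2}, …, y_D) = (a_2, …, a_i)]. -/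
theorem Fin.forall_iff_zero_and_forall_succ {i : ℕ} (hi : 0 < i) {P : Fin i → Prop} :
    (∀ j, P j) ↔ P ⟨0, hi⟩ ∧ ∀ j : Fin (i - 1), P ⟨j + 1, by omega⟩ := by
  refine ⟨fun h => ⟨h _, fun j => h _⟩, ?_⟩
  rintro ⟨h0, hsucc⟩ ⟨_ | j, hj⟩
  · exact h0
  · exact hsucc ⟨j, by omega⟩

theorem ZMod.two_add_one_eq_iff_ne (u v : ZMod 2) : u + 1 = v ↔ u ≠ v := by
  revert u v; decide

namespace PMF

variable {α : Type*}

theorem toOuterMeasure_uniformOfFintype_preimage_equiv [Fintype α] [Nonempty α]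
    (σ : α ≃ α) (s : Set α) :
    (uniformOfFintype α).toOuterMeasure (σ ⁻¹' s) = (uniformOfFintype α).toOuterMeasure s := by
  simp only [toOuterMeasure_apply]
  conv_rhs => rw [← σ.tsum_eq]
  exact tsum_congr fun x => by by_cases hx : σ x ∈ s <;> simp [hx]

theorem toOuterMeasure_inter_eq_half_of_preimage_eq_diff {p : PMF α} (σ : α ≃ α)
    (hσ : ∀ s, p.toOuterMeasure (σ ⁻¹' s) = p.toOuterMeasure s) {B E : Set α}
    (h : σ ⁻¹' (B ∩ E) = B \ E) :
    p.toOuterMeasure (B ∩ E) = 1 / 2 * p.toOuterMeasure B := by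
  have hE : p.toOuterMeasure.IsCaratheodory E :=
    (MeasureTheory.OuterMeasure.isCaratheodory_iff _).1 (by rw [toOuterMeasure_caratheodory]; trivial)
  rw [hE B, ← h, hσ, ← two_mul, one_div, ENNReal.inv_mul_cancel_left (by norm_num) (by norm_num)]

end PMF

section

variable {p n : ℕ} (g : (Fin p → ZMod 2) → ZMod 2)

theorem nlhbF_add_single_of_lt (x : Fin n → ZMod 2) {k : Fin n} (c : ZMod 2) {m : Fin (n - p)}
    (hkm : k.val < m.val) :
    nlhbF p n g (x + Pi.single k c) m = nlhbF p n g x m := by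
  have hk : ∀ j : Fin p, m.val + 1 + j.val ≠ k.val := fun j => by omega
  simp [nlhbF, Fin.ext_iff, hkm.ne', hk]

theorem nlhbF_add_single_self (x : Fin n → ZMod 2) (c : ZMod 2) (m : Fin (n - p)) :
    nlhbF p n g (x + Pi.single (Fin.castLE (Nat.sub_le n p) m) c) m = nlhbF p n g x m + c := by
  have hk : ∀ j : Fin p, m.val + 1 + j.val ≠ m.val := fun j => by omega
  simp [nlhbF, Pi.single_apply, Fin.ext_iff, hk]
  ring

theorem preimage_add_single_inter_setOf_nlhbF_eq_diff {l : ℕ} (idx : Fin l → Fin (n - p))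
    (b : Fin l → ZMod 2) (m : Fin (n - p)) (hm : ∀ j, m < idx j) (c : ZMod 2) :
    Equiv.addRight (Pi.single (Fin.castLE (Nat.sub_le n p) m) 1) ⁻¹'
        ({x | ∀ j, nlhbF p n g x (idx j) = b j} ∩ {x | nlhbF p n g x m = c}) =
      {x | ∀ j, nlhbF p n g x (idx j) = b j} \ {x | nlhbF p n g x m = c} := by
  ext x
  have hlater : ∀ j, nlhbF p n g (x + Pi.single (Fin.castLE (Nat.sub_le n p) m) 1) (idx j) =
      nlhbF p n g x (idx j) := fun j => nlhbF_add_single_of_lt g x 1 (hm j)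
  simp [hlater, nlhbF_add_single_self, ZMod.two_add_one_eq_iff_ne]

theorem setOf_nlhbF_suffix_eq_inter {i : ℕ} (hi : 0 < i) (hiD : i ≤ n - p) (a : Fin i → ZMod 2) :
    {x | ∀ j : Fin i, nlhbF p n g x ⟨n - p - i + j.val, by omega⟩ = a j} =
      {x | ∀ j : Fin (i - 1), nlhbF p n g x ⟨n - p - i + 1 + j.val, by omega⟩
          = a ⟨j.val + 1, by omega⟩} ∩
        {x | nlhbF p n g x ⟨n - p - i, by omega⟩ = a ⟨0, hi⟩} := by
  ext x
  simp only [Set.mem_ofPred_eq, Set.mem_inter_iff, Fin.forall_iff_zero_and_forall_succ hi,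
    add_zero, add_assoc, add_comm 1]
  exact and_comm

end

/-- With `x` uniform on `{0,1}^n` and `y = f(x)`, for every `2 ≤ i ≤ D` and
`a ∈ {0,1}^i`, `Pr[(y_{D−i+1}, …, y_D) = (a_1, …, a_i)]
  = (1/2) · Pr[(y_{D−i+2}, …, y_D) = (a_2, …, a_i)]`
(positions written 0-based: the last `i` bits of `y` occupy indices `D−i, …, D−1`). -/
theorem nlhb_suffix_recursion (p n : ℕ)
    (g : (Fin p → ZMod 2) → ZMod 2) (i : ℕ) (h2 : 2 ≤ i) (hiD : i ≤ n - p)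
    (a : Fin i → ZMod 2) :
    (PMF.uniformOfFintype (Fin n → ZMod 2)).toOuterMeasure
      {x | ∀ j : Fin i,
        nlhbF p n g x ⟨n - p - i + j.val, by have := j.isLt; omega⟩ = a j}
    = (1 / 2) *
      (PMF.uniformOfFintype (Fin n → ZMod 2)).toOuterMeasure
        {x | ∀ j : Fin (i - 1),
          nlhbF p n g x ⟨n - p - i + 1 + j.val, by have := j.isLt; omega⟩
            = a ⟨j.val + 1, by have := j.isLt; omega⟩} := by
  rw [setOf_nlhbF_suffix_eq_inter g (by omega) hiD a]
  refine PMF.toOuterMeasure_inter_eq_half_of_preimage_eq_diff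
    (Equiv.addRight (Pi.single ⟨n - p - i, by omega⟩ 1))
    (PMF.toOuterMeasure_uniformOfFintype_preimage_equiv _) ?_
  exact preimage_add_single_inter_setOf_nlhbF_eq_diff g _ _ _
    (fun j => by simp only [Fin.lt_def]; omega) _
end

section
/- Suppose g vanishes on all inputs of Hamming weight at most 1. Let G be a binary k × n' matrix with columns g_1, …, g_{n'}, let m ∈ {0,1}^k, and write x = mG ∈ {0,1}^{n'} with bits x_1, …, x_{n'} (matrix–vector product over GF(2)). Choose integers r_1, …, r_{n'−1} with r_i ≥ p − 1 and r_1 + ⋯ + r_{n'−1} = n − p − n', and let A be the k × n matrix obtained from G by inserting r_i all-zero columns between columns g_i and g_{i+1} for each 1 ≤ i ≤ n'−1 and appending p all-zero columns after g_{n'}. Then f(mA) is the D-bit vector [x_1, 0^{r_1}, x_2, 0^{r_2}, …, 0^{r_{n'−1}}, x_{n'}], i.e. f(mA) has x_j in position 1 + Σ_{i<j}(r_i + 1) for each 1 ≤ j ≤ n' and zeros in all other positions. -/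
open Finset Matrix

theorem Nat.add_sum_range_add_le_of_lt {r : ℕ → ℕ} {a b : ℕ} (hab : a < b) :
    a + ∑ i ∈ range a, r i + (r a + 1) ≤ b + ∑ i ∈ range b, r i := by
  have : ∑ i ∈ range (a + 1), r i ≤ ∑ i ∈ range b, r i :=
    sum_le_sum_of_subset (range_subset_range.2 hab)
  rw [sum_range_succ] at this
  omega

section Separated

variable {R : Type*} [Zero R] [DecidableEq R] {n p : ℕ} {x : Fin n → R}

theorem hammingNorm_window_le_one
    (hx : ∀ a b : Fin n, x a ≠ 0 → x b ≠ 0 → a < b → a.val + p ≤ b.val)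
    (s : ℕ) (hs : s + p ≤ n) :
    hammingNorm (fun t : Fin p => x ⟨s + t.val, by omega⟩) ≤ 1 := by
  unfold hammingNorm
  rw [card_le_one]
  have hfar : ∀ u v : Fin p, x ⟨s + u.val, by omega⟩ ≠ 0 → x ⟨s + v.val, by omega⟩ ≠ 0 →
      ¬u < v := fun u v hu hv huv => by
    have := hx _ _ hu hv (Fin.mk_lt_mk.2 (by omega))
    simp only at this
    omega
  intro t ht t' ht'
  simp only [mem_filter, mem_univ, true_and] at ht ht'
  exact le_antisymm (not_lt.1 (hfar t' t ht' ht)) (not_lt.1 (hfar t t' ht ht'))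

end Separated

theorem nlhbF_apply_of_separated {p n : ℕ} {g : (Fin p → ZMod 2) → ZMod 2}
    (hg : ∀ w : Fin p → ZMod 2, hammingNorm w ≤ 1 → g w = 0) {x : Fin n → ZMod 2}
    (hx : ∀ a b : Fin n, x a ≠ 0 → x b ≠ 0 → a < b → a.val + p ≤ b.val) (i : Fin (n - p)) :
    nlhbF p n g x i = x ⟨i.val, by omega⟩ := by
  have hwindow := hg _ (hammingNorm_window_le_one hx (i.val + 1) (by omega))
  simp only [nlhbF]
  rw [hwindow, add_zero]

section VecMul

variable {R : Type*} [NonUnitalNonAssocSemiring R] {k n n' : ℕ} {m : Fin k → R}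
  {A : Matrix (Fin k) (Fin n) R}

theorem vecMul_apply_eq_zero_of_col {c : Fin n} (hc : ∀ t, A t c = 0) : (m ᵥ* A) c = 0 := by
  simp [vecMul, dotProduct, hc]

theorem vecMul_apply_eq_of_col {G : Matrix (Fin k) (Fin n') R} {c : Fin n} {j : Fin n'}
    (hc : ∀ t, A t c = G t j) : (m ᵥ* A) c = (m ᵥ* G) j :=
  congrArg (m ⬝ᵥ ·) (funext hc)

theorem vecMul_separated_of_cols {p : ℕ} (pos : ℕ → ℕ)
    (hsep : ∀ a b : Fin n', a < b → pos a + p ≤ pos b)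
    (hA0 : ∀ c : Fin n, (∀ j : Fin n', pos j ≠ c.val) → ∀ t, A t c = 0)
    (a b : Fin n) (ha : (m ᵥ* A) a ≠ 0) (hb : (m ᵥ* A) b ≠ 0) (hab : a < b) :
    a.val + p ≤ b.val := by
  have hcol : ∀ c : Fin n, (m ᵥ* A) c ≠ 0 → ∃ j : Fin n', pos j = c.val := fun c hc => by
    by_contra! h
    exact hc (vecMul_apply_eq_zero_of_col (hA0 c h))
  obtain ⟨ja, hja⟩ := hcol a ha
  obtain ⟨jb, hjb⟩ := hcol b hb
  rcases lt_trichotomy ja jb with h | rfl | h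
  · have := hsep ja jb h; omega
  · omega
  · have := hsep jb ja h; omega

end VecMul

/-- Suppose `g` vanishes on inputs of Hamming weight ≤ 1.  Let `x = mG` and let
`A` be obtained from `G` by inserting `r_i` zero columns between columns `i` and `i+1`
(`1 ≤ i ≤ n'−1`) and appending `p` zero columns at the end, so that column `j` of `G` sits at
(0-based) position `pos j = j + Σ_{i<j} r_i` of `A`, with `r_i ≥ p−1` and
`Σ r_i = n − p − n'`.  Then `f(mA)` is the `D`-bit vector
`[x_1, 0^{r_1}, x_2, 0^{r_2}, …, 0^{r_{n'−1}}, x_{n'}]`: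
it has `x_j` at position `pos j` and zeros everywhere else. -/
theorem nlhb_embedding (p n n' k : ℕ)
    (g : (Fin p → ZMod 2) → ZMod 2)
    (hg : ∀ w : Fin p → ZMod 2, hammingNorm w ≤ 1 → g w = 0)
    (r : ℕ → ℕ) (hr : ∀ i, i < n' - 1 → p - 1 ≤ r i)
    (hpos : ∀ j : Fin n', j.val + ∑ i ∈ Finset.range j.val, r i < n - p)
    (G : Matrix (Fin k) (Fin n') (ZMod 2)) (m : Fin k → ZMod 2)
    (A : Matrix (Fin k) (Fin n) (ZMod 2))
    (hA1 : ∀ j : Fin n', ∀ t : Fin k,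
      A t ⟨j.val + ∑ i ∈ Finset.range j.val, r i, by have := hpos j; omega⟩ = G t j)
    (hA0 : ∀ c : Fin n,
      (∀ j : Fin n', j.val + ∑ i ∈ Finset.range j.val, r i ≠ c.val) →
      ∀ t : Fin k, A t c = 0) :
    (∀ j : Fin n',
      nlhbF p n g (Matrix.vecMul m A)
          ⟨j.val + ∑ i ∈ Finset.range j.val, r i, hpos j⟩
        = Matrix.vecMul m G j) ∧
    (∀ d : Fin (n - p),
      (∀ j : Fin n', j.val + ∑ i ∈ Finset.range j.val, r i ≠ d.val) →
      nlhbF p n g (Matrix.vecMul m A) d = 0) := by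
  have hsep : ∀ a b : Fin n', a < b →
      a.val + ∑ i ∈ range a.val, r i + p ≤ b.val + ∑ i ∈ range b.val, r i := fun a b hab => by
    have := hr a (by omega)
    have := Nat.add_sum_range_add_le_of_lt (r := r) hab
    omega
  have hx := vecMul_separated_of_cols (m := m) (fun j => j + ∑ i ∈ range j, r i) hsep hA0
  refine ⟨fun j => ?_, fun d hd => ?_⟩
  · rw [nlhbF_apply_of_separated hg hx]
    exact vecMul_apply_eq_of_col (hA1 j)
  · rw [nlhbF_apply_of_separated hg hx]
    exact vecMul_apply_eq_zero_of_col (hA0 _ hd)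
end

section
/- (Lemma 1: hyb_i = U_{kn+D} if s_i = 1.) Fix s ∈ {0,1}^k and an index i ∈ {1,…,k} with s_i = 1. Let A be uniformly distributed on the set of binary k × n matrices, let v ∈ {0,1}^D have i.i.d. Bernoulli(ε) bits, and let c be uniformly distributed on {0,1}^n, with A, v, c mutually independent. Let A' be the matrix obtained from A by replacing its i-th row by (i-th row of A) + c (coordinatewise XOR), leaving all other rows unchanged, and let z = f(sA) + v ∈ {0,1}^D. Then the pair (A', z) is uniformly distributed on {0,1}^{k×n} × {0,1}^D; i.e. Pr[A' = Â, z = r] = 2^{−(kn+D)} for every matrix Â and every r ∈ {0,1}^D. -/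
open Matrix

namespace PMF

variable {α β γ : Type*} [Fintype α] [Nonempty α] [Fintype β] [Nonempty β]
  [Fintype γ] [Nonempty γ]

theorem map_uniformOfFintype_of_bijective {f : α → β} (hf : f.Bijective) :
    (uniformOfFintype α).map f = uniformOfFintype β := by
  classical
  ext b
  obtain ⟨a, rfl⟩ := hf.2 b
  simp [map_apply, hf.injective.eq_iff, Fintype.card_of_bijective hf]

theorem uniformOfFintype_prod :
    uniformOfFintype (α × β) =
      (uniformOfFintype α).bind fun a => (uniformOfFintype β).map (Prod.mk a) := by
  classical
  ext ⟨a, b⟩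
  simp [bind_apply, map_apply, Fintype.card_prod, ENNReal.mul_inv, ite_and]

theorem map_fst_uniformOfFintype :
    (uniformOfFintype (α × β)).map Prod.fst = uniformOfFintype α := by
  simp only [uniformOfFintype_prod, map_bind, map_comp]
  exact (congrArg _ (funext fun a => map_const _ a)).trans (bind_pure _)

theorem map_uniformOfFintype_prod_map_right {φ : α → β → γ}
    (hφ : ∀ a, (uniformOfFintype β).map (φ a) = uniformOfFintype γ) :
    (uniformOfFintype (α × β)).map (fun x => (x.1, φ x.1 x.2)) =
      uniformOfFintype (α × γ) := by
  simp only [uniformOfFintype_prod, map_bind, map_comp]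
  congr 1
  funext a
  rw [← hφ a, map_comp]
  rfl

theorem map_uniformOfFintype_sub_add {G W : Type*} [AddGroup G] [Fintype G] [AddGroup W]
    [Fintype W] [Nonempty W] {F : G → W} (hF : (uniformOfFintype G).map F = uniformOfFintype W)
    (t : G) (v : W) : (uniformOfFintype G).map (fun c => F (t - c) + v) = uniformOfFintype W := by
  rw [show (fun c => F (t - c) + v) = (· + v) ∘ F ∘ (t - ·) from rfl, ← map_comp, ← map_comp,
    map_uniformOfFintype_of_bijective (f := (t - ·)) (Equiv.subLeft t).bijective, hF,
    map_uniformOfFintype_of_bijective (f := (· + v)) (Equiv.addRight v).bijective]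

end PMF

namespace Matrix

variable {m n R : Type*} [DecidableEq m]

theorem vecMul_updateRow_add [Fintype m] [Semiring R] (s : m → R) (A : Matrix m n R) (i : m)
    (c : n → R) : s ᵥ* A.updateRow i (A i + c) = s ᵥ* A + s i • c := by
  ext j
  have hrow : ∀ x, s x * A.updateRow i (A i + c) x j =
      s x * A x j + if x = i then s x * c j else 0 := by
    intro x
    by_cases h : x = i <;> simp [h, updateRow_apply, mul_add]
  simp only [vecMul, dotProduct, hrow, Finset.sum_add_distrib, Finset.sum_ite_eq',
    Finset.mem_univ, if_true, Pi.add_apply, Pi.smul_apply, smul_eq_mul]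

theorem bijective_updateRow_add [AddGroup R] (i : m) :
    (fun x : Matrix m n R × (n → R) => (x.1.updateRow i (x.1 i + x.2), x.2)).Bijective := by
  refine Function.bijective_iff_has_inverse.2
    ⟨fun y => (y.1.updateRow i (y.1 i - y.2), y.2), fun x => Prod.ext ?_ rfl,
      fun y => Prod.ext ?_ rfl⟩ <;>
  ext a b <;> by_cases h : a = i <;> simp [h, updateRow_apply]

end Matrix

theorem Fintype.card_matrix {m n α : Type*} [Fintype m] [DecidableEq m] [Fintype n]
    [DecidableEq n] [Fintype α] :
    Fintype.card (Matrix m n α) = Fintype.card α ^ (Fintype.card m * Fintype.card n) := by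
  change Fintype.card (m → n → α) = _
  rw [Fintype.card_fun, Fintype.card_fun, ← pow_mul, mul_comm]

section Nlhb

variable (p n : ℕ) (g : (Fin p → ZMod 2) → ZMod 2)

def nlhbSplit (x : Fin n → ZMod 2) :
    (Fin (n - p) → ZMod 2) × (Fin (n - (n - p)) → ZMod 2) :=
  (nlhbF p n g x, fun j => x ⟨n - p + j, by omega⟩)

theorem nlhbSplit_injective : (nlhbSplit p n g).Injective := by
  intro x y hxy
  obtain ⟨hf, htail⟩ := Prod.mk.inj hxy
  funext j
  induction j using WellFoundedGT.induction with
  | _ j ih =>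
    by_cases hj : j.val < n - p
    · have hj' := congrFun hf ⟨j, hj⟩
      simp only [nlhbF] at hj'
      rw [funext fun t : Fin p => ih _ (Fin.mk_lt_mk.2 (by omega))] at hj'
      exact add_right_cancel hj'
    · have := congrFun htail ⟨j - (n - p), by omega⟩
      convert this using 2 <;> ext <;> simp only <;> omega

theorem nlhbSplit_bijective : (nlhbSplit p n g).Bijective := by
  refine (Fintype.bijective_iff_injective_and_card _).2 ⟨nlhbSplit_injective p n g, ?_⟩
  simp only [Fintype.card_prod, Fintype.card_pi, Finset.prod_const, Finset.card_univ,
    Fintype.card_fin, ZMod.card, ← pow_add]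
  congr 1
  omega

theorem map_nlhbF_uniformOfFintype :
    (PMF.uniformOfFintype (Fin n → ZMod 2)).map (nlhbF p n g) =
      PMF.uniformOfFintype (Fin (n - p) → ZMod 2) := by
  rw [show nlhbF p n g = Prod.fst ∘ nlhbSplit p n g from rfl, ← PMF.map_comp,
    PMF.map_uniformOfFintype_of_bijective (nlhbSplit_bijective p n g),
    PMF.map_fst_uniformOfFintype]

end Nlhb

section Hybrid

open PMF

variable {k n R W : Type*} [Fintype k] [DecidableEq k] [Fintype n] [DecidableEq n]
  [Ring R] [Fintype R] [AddGroup W] [Fintype W] [Nonempty W]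

noncomputable def hybrid (F : (n → R) → W) (ν : PMF W) (s : k → R) (i : k) :
    PMF (Matrix k n R × W) :=
  (uniformOfFintype (Matrix k n R)).bind fun A => ν.bind fun v =>
    (uniformOfFintype (n → R)).map fun c => (A.updateRow i (A i + c), F (s ᵥ* A) + v)

theorem hybrid_eq_uniformOfFintype {F : (n → R) → W}
    (hF : (uniformOfFintype (n → R)).map F = uniformOfFintype W) (ν : PMF W) {s : k → R}
    {i : k} (hs : s i = 1) : hybrid F ν s i = uniformOfFintype (Matrix k n R × W) := by
  have hshear : ∀ v : W, ((uniformOfFintype (Matrix k n R)).bind fun A =>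
      (uniformOfFintype (n → R)).map fun c => (A.updateRow i (A i + c), F (s ᵥ* A) + v)) =
      uniformOfFintype (Matrix k n R × W) := by
    intro v
    calc _ = (uniformOfFintype (Matrix k n R × (n → R))).map
          ((fun x => (x.1, F (s ᵥ* x.1 - x.2) + v)) ∘
            fun x => (x.1.updateRow i (x.1 i + x.2), x.2)) := by
          -- `s i = 1` gives `s ᵥ* A = s ᵥ* A' - c` for the shifted matrix `A'`
          rw [uniformOfFintype_prod, PMF.map_bind]
          congr 1
          funext A
          rw [map_comp]
          congr 1
          funext c
          simp [vecMul_updateRow_add, hs]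
      _ = (uniformOfFintype (Matrix k n R × (n → R))).map
          (fun x => (x.1, F (s ᵥ* x.1 - x.2) + v)) := by
          rw [← map_comp, map_uniformOfFintype_of_bijective (bijective_updateRow_add i)]
      _ = _ := map_uniformOfFintype_prod_map_right fun _ => map_uniformOfFintype_sub_add hF _ v
  rw [hybrid, bind_comm]
  simp only [hshear, bind_const]

end Hybrid

theorem nlhb_hyb_uniform_general (p n k : ℕ)
    (g : (Fin p → ZMod 2) → ZMod 2)
    (ν : PMF (Fin (n - p) → ZMod 2))
    (s : Fin k → ZMod 2) (i : Fin k) (hs : s i = 1)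
    (Ahat : Matrix (Fin k) (Fin n) (ZMod 2)) (rvec : Fin (n - p) → ZMod 2) :
    ((do
      let A ← PMF.uniformOfFintype (Matrix (Fin k) (Fin n) (ZMod 2))
      let v ← ν
      let c ← PMF.uniformOfFintype (Fin n → ZMod 2)
      return (Matrix.updateRow A i (A i + c),
              nlhbF p n g (Matrix.vecMul s A) + v)) :
        PMF (Matrix (Fin k) (Fin n) (ZMod 2) × (Fin (n - p) → ZMod 2)))
      (Ahat, rvec)
    = ((2 : ENNReal) ^ (k * n + (n - p)))⁻¹ := by
  have h := DFunLike.congr_fun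
    (hybrid_eq_uniformOfFintype (map_nlhbF_uniformOfFintype p n g) ν hs) (Ahat, rvec)
  -- the `do` block is `hybrid (nlhbF p n g) ν s i` unfolded
  refine h.trans ?_
  simp [PMF.uniformOfFintype_apply, Fintype.card_prod, Fintype.card_matrix, pow_add]

/-- Lemma 1: Fix a secret `s` with `s_i = 1`.  With `A` uniform on `k × n`
binary matrices, `v` an i.i.d. Bernoulli(ε) noise vector, `c` uniform on `{0,1}^n`, all
independent, let `A'` be `A` with its `i`-th row replaced by `(A)_i + c`, and
`z = f(sA) + v`.  Then `(A', z)` is uniform: `Pr[(A', z) = (Â, r)] = 2^{−(kn+D)}`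
for every `Â` and `r`. -/
theorem nlhb_hyb_uniform (p n k : ℕ) (hp : 1 ≤ p) (hpn : p < n)
    (g : (Fin p → ZMod 2) → ZMod 2)
    (ε : ENNReal) (hε0 : 0 < ε) (hε : ε < 1 / 2)
    (ν : PMF (Fin (n - p) → ZMod 2))
    (hν : ∀ w, ν w = ∏ i, (if w i = 1 then ε else 1 - ε))
    (s : Fin k → ZMod 2) (i : Fin k) (hs : s i = 1)
    (Ahat : Matrix (Fin k) (Fin n) (ZMod 2)) (rvec : Fin (n - p) → ZMod 2) :
    ((do
      let A ← PMF.uniformOfFintype (Matrix (Fin k) (Fin n) (ZMod 2))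
      let v ← ν
      let c ← PMF.uniformOfFintype (Fin n → ZMod 2)
      return (Matrix.updateRow A i (A i + c),
              nlhbF p n g (Matrix.vecMul s A) + v)) :
        PMF (Matrix (Fin k) (Fin n) (ZMod 2) × (Fin (n - p) → ZMod 2)))
      (Ahat, rvec)
    = ((2 : ENNReal) ^ (k * n + (n - p)))⁻¹ :=
  nlhb_hyb_uniform_general p n k g ν s i hs Ahat rvec
end

section
/- Let W be a random vector in {0,1}^D and let e ∈ {0,1}^D be independent of W with i.i.d. Bernoulli(ε) bits, where 0 < ε ≤ 1/2. Let u, u' be nonnegative integers such that Pr[wt(W) ≤ u] > 0 and Pr[wt(W) = u] > 0. Then Pr[wt(W + e) ≤ u' | wt(W) ≤ u] ≥ Pr[wt(W + e) ≤ u' | wt(W) = u], where + denotes coordinatewise XOR. -/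
/-!
Let `f w = Pr[wt(w + e) ≤ u']`, or more generally `E[g(wt(w + e))]` for an antitone `g`.
It is invariant under permutations of the coordinates, and setting a zero bit `w k` to one
cannot increase it: pairing every noise pattern `e` with `e + δ_k`, the pattern of the pair with
`e k = 0` is the likelier one (`ε ≤ 1 - ε`) and also the one giving the lighter output, so the
binary rearrangement inequality applies pair by pair. Hence `f` is an antitone function of
`wt(w)`. Conditioned on `wt(W) = u` the probability in question is the constant value of `f` on
that sphere, while conditioned on `wt(W) ≤ u` it averages values of `f` that are all at least
as large.
-/

open Finset ENNReal

-- Mathlib's `mul_add_mul_le_mul_add_mul` needs additive cancellation, which `ℝ≥0∞` lacks.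
lemma CanonicallyOrderedAdd.mul_add_mul_le_mul_add_mul {R : Type*} [CommSemiring R]
    [PartialOrder R] [CanonicallyOrderedAdd R] {a b c d : R} (hab : a ≤ b) (hcd : c ≤ d) :
    a * d + b * c ≤ a * c + b * d := by
  obtain ⟨t, rfl⟩ := exists_add_of_le hab
  obtain ⟨s, rfl⟩ := exists_add_of_le hcd
  calc a * (c + s) + (a + t) * c ≤ a * (c + s) + (a + t) * c + t * s := le_self_add
    _ = a * c + (a + t) * (c + s) := by ring

lemma ENNReal.le_one_sub_self_of_le_half {ε : ℝ≥0∞} (hε : ε ≤ 1 / 2) : ε ≤ 1 - ε := by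
  refine ENNReal.le_sub_of_add_le_left (ne_top_of_le_ne_top (by simp) hε) ?_
  calc ε + ε ≤ 1 / 2 + 1 / 2 := add_le_add hε hε
    _ = 1 := ENNReal.add_halves 1

lemma ZMod.two_eq_of_ne_zero_iff {a b : ZMod 2} (h : a ≠ 0 ↔ b ≠ 0) : a = b := by
  revert a b; decide

lemma add_self_eq_zero_of_zmod_two {ι : Type*} (y : ι → ZMod 2) : y + y = 0 :=
  funext fun i => CharTwo.add_self_eq_zero (y i)

section Hamming
variable {ι : Type*} [Fintype ι]

lemma hammingNorm_comp_perm (x : ι → ZMod 2) (σ : Equiv.Perm ι) :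
    hammingNorm (x ∘ σ) = hammingNorm x := by
  simp only [hammingNorm]
  exact card_equiv σ fun i => by simp

lemma exists_perm_eq_comp_of_hammingNorm_eq {x y : ι → ZMod 2}
    (h : hammingNorm x = hammingNorm y) : ∃ σ : Equiv.Perm ι, y = x ∘ σ := by
  classical
  obtain ⟨σ, hσ⟩ := Equiv.Perm.exists_map_finset_eq {i | y i ≠ 0} {i | x i ≠ 0} h.symm
  refine ⟨σ, funext fun i => ZMod.two_eq_of_ne_zero_iff ?_⟩
  simpa using Finset.ext_iff.mp hσ (σ i)

lemma exists_eq_zero_of_hammingNorm_lt {x : ι → ZMod 2} (h : hammingNorm x < Fintype.card ι) :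
    ∃ k, x k = 0 := by
  by_contra! hx
  exact h.ne (by simp [hammingNorm, hx])

variable [DecidableEq ι]

lemma hammingNorm_add_single_one {x : ι → ZMod 2} {k : ι} (hk : x k = 0) :
    hammingNorm (x + Pi.single k 1) = hammingNorm x + 1 := by
  have : univ.filter (fun i => (x + Pi.single k 1 : ι → ZMod 2) i ≠ 0) =
      insert k (univ.filter fun i => x i ≠ 0) := by
    ext i
    rcases eq_or_ne i k with rfl | hik <;> simp [*]
  rw [hammingNorm, this, card_insert_of_notMem (by simp [hk]), hammingNorm]

end Hamming

section Channel
variable {ι : Type*} [Fintype ι] {ε : ℝ≥0∞}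

-- `bsc` = binary symmetric channel: `e` is the i.i.d. Bernoulli(ε) noise vector it adds.
noncomputable def bscProb (ε : ℝ≥0∞) (e : ι → ZMod 2) : ℝ≥0∞ :=
  ∏ i, if e i = 1 then ε else 1 - ε

lemma bscProb_comp_perm (e : ι → ZMod 2) (σ : Equiv.Perm ι) :
    bscProb ε (e ∘ σ) = bscProb ε e :=
  Equiv.prod_comp σ fun i => if e i = 1 then ε else 1 - ε

variable [DecidableEq ι] {g : ℕ → ℝ≥0∞}

noncomputable def bscExpect (ε : ℝ≥0∞) (g : ℕ → ℝ≥0∞) (x : ι → ZMod 2) : ℝ≥0∞ :=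
  ∑ e, bscProb ε e * g (hammingNorm (x + e))

lemma bscExpect_comp_perm (x : ι → ZMod 2) (σ : Equiv.Perm ι) :
    bscExpect ε g (x ∘ σ) = bscExpect ε g x := by
  rw [bscExpect, ← (σ.arrowCongr (Equiv.refl (ZMod 2))).symm.sum_comp]
  refine Fintype.sum_congr _ _ fun e => ?_
  change bscProb ε (e ∘ σ) * g (hammingNorm ((x + e) ∘ σ)) = _
  rw [bscProb_comp_perm, hammingNorm_comp_perm]

lemma bscProb_add_single_one_le (hε : ε ≤ 1 - ε) {e : ι → ZMod 2} {k : ι} (he : e k = 0) :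
    bscProb ε (e + Pi.single k 1) ≤ bscProb ε e := by
  rw [bscProb, bscProb, Fintype.prod_eq_mul_prod_compl k, Fintype.prod_eq_mul_prod_compl k,
    prod_congr rfl fun i hi => by
      rw [Pi.add_apply, Pi.single_eq_of_ne (by simpa using hi), add_zero]]
  gcongr
  simpa [he] using hε

lemma bscProb_pair_rearrangement (hε : ε ≤ 1 - ε) (hg : Antitone g) {x e : ι → ZMod 2} {k : ι}
    (hx : x k = 0) (he : e k = 0) :
    bscProb ε e * g (hammingNorm (x + Pi.single k 1 + e)) +
        bscProb ε (e + Pi.single k 1) *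
          g (hammingNorm (x + Pi.single k 1 + (e + Pi.single k 1))) ≤
      bscProb ε e * g (hammingNorm (x + e)) +
        bscProb ε (e + Pi.single k 1) * g (hammingNorm (x + (e + Pi.single k 1))) := by
  have hδ : x + Pi.single k 1 + (e + Pi.single k 1) = x + e := by
    rw [add_add_add_comm, add_self_eq_zero_of_zmod_two, add_zero]
  rw [hδ, add_right_comm, ← add_assoc, hammingNorm_add_single_one (by simp [hx, he])]
  exact (add_comm _ _).trans_le <| (CanonicallyOrderedAdd.mul_add_mul_le_mul_add_mul
    (bscProb_add_single_one_le hε he) (hg (Nat.le_succ _))).trans_eq (add_comm _ _)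

lemma bscExpect_add_single_one_le (hε : ε ≤ 1 - ε) (hg : Antitone g) {x : ι → ZMod 2} {k : ι}
    (hx : x k = 0) : bscExpect ε g (x + Pi.single k 1) ≤ bscExpect ε g x := by
  set δ : ι → ZMod 2 := Pi.single k 1
  have hpair : ∀ y, bscExpect ε g y + bscExpect ε g y =
      ∑ e, (bscProb ε e * g (hammingNorm (y + e)) +
        bscProb ε (e + δ) * g (hammingNorm (y + (e + δ)))) := fun y => by
    rw [sum_add_distrib]
    exact congrArg (bscExpect ε g y + ·)
      (Equiv.sum_comp (Equiv.addRight δ) fun e => bscProb ε e * g (hammingNorm (y + e))).symm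
  have hdouble : bscExpect ε g (x + δ) + bscExpect ε g (x + δ) ≤
      bscExpect ε g x + bscExpect ε g x := by
    rw [hpair, hpair]
    refine sum_le_sum fun e _ => ?_
    rcases (by decide : ∀ a : ZMod 2, a = 0 ∨ a = 1) (e k) with he | he
    · exact bscProb_pair_rearrangement hε hg hx he
    · have h := bscProb_pair_rearrangement hε hg hx (e := e + δ) (by simp [δ, he]; decide)
      rwa [add_assoc e, add_self_eq_zero_of_zmod_two, add_zero,
        add_comm (bscProb ε (e + δ) * _), add_comm (bscProb ε (e + δ) * _)] at h
  exact le_of_not_gt fun h => (ENNReal.add_lt_add h h).not_ge hdouble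

lemma bscExpect_antitone (hε : ε ≤ 1 - ε) (hg : Antitone g) {x y : ι → ZMod 2}
    (h : hammingNorm y ≤ hammingNorm x) : bscExpect ε g x ≤ bscExpect ε g y := by
  obtain ⟨n, hn⟩ := Nat.exists_eq_add_of_le h
  induction n generalizing y with
  | zero =>
    obtain ⟨σ, rfl⟩ := exists_perm_eq_comp_of_hammingNorm_eq (x := y) (y := x) hn.symm
    rw [bscExpect_comp_perm]
  | succ n ih =>
    obtain ⟨k, hk⟩ := exists_eq_zero_of_hammingNorm_lt (x := y)
      (by have := hammingNorm_le_card_fintype (x := x); omega)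
    refine (ih ?_ ?_).trans (bscExpect_add_single_one_le hε hg hk) <;>
      rw [hammingNorm_add_single_one hk] <;> omega

lemma toOuterMeasure_hammingNorm_add_le_eq_bscExpect (ν : PMF (ι → ZMod 2))
    (hν : ∀ e, ν e = bscProb ε e) (x : ι → ZMod 2) (r : ℕ) :
    ν.toOuterMeasure {e | hammingNorm (x + e) ≤ r} =
      bscExpect ε (fun n => if n ≤ r then 1 else 0) x := by
  rw [PMF.toOuterMeasure_apply_fintype, bscExpect]
  refine sum_congr rfl fun e _ => ?_
  rw [Set.indicator_apply, hν e, mul_ite, mul_one, mul_zero]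
  rfl

end Channel

namespace PMF

lemma toOuterMeasure_tsum_indicator_mul_div_le {α : Type*} (p : PMF α) (f : α → ℝ≥0∞)
    {s t : Set α} (hst : ∀ a ∈ s, ∀ b ∈ t, f a ≤ f b) (ht : p.toOuterMeasure t ≠ 0) :
    (∑' a, s.indicator (fun a => p a * f a) a) / p.toOuterMeasure s ≤
      (∑' a, t.indicator (fun a => p a * f a) a) / p.toOuterMeasure t := by
  set m := ⨅ b ∈ t, f b
  have hs : ∑' a, s.indicator (fun a => p a * f a) a ≤ m * p.toOuterMeasure s := by
    rw [toOuterMeasure_apply, ← ENNReal.tsum_mul_left]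
    refine ENNReal.tsum_le_tsum fun a => ?_
    by_cases ha : a ∈ s
    · simp only [ha, Set.indicator_of_mem]
      rw [mul_comm m]
      gcongr
      exact le_iInf₂ (hst a ha)
    · simp [ha]
  have ht' : m * p.toOuterMeasure t ≤ ∑' a, t.indicator (fun a => p a * f a) a := by
    rw [toOuterMeasure_apply, ← ENNReal.tsum_mul_left]
    refine ENNReal.tsum_le_tsum fun b => ?_
    by_cases hb : b ∈ t
    · simp only [hb, Set.indicator_of_mem]
      rw [mul_comm m]
      gcongr
      exact iInf₂_le b hb
    · simp [hb]
  have ht_top : p.toOuterMeasure t ≠ ⊤ := by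
    rw [toOuterMeasure_apply]
    exact p.tsum_coe_indicator_ne_top t
  exact (ENNReal.div_le_of_le_mul hs).trans
    ((ENNReal.le_div_iff_mul_le (.inl ht) (.inl ht_top)).2 ht')

universe u
variable {α β : Type u} (p : PMF α) (q : PMF β)

lemma toOuterMeasure_pair_apply (s : Set (α × β)) :
    (do let a ← p; let b ← q; return (a, b) : PMF (α × β)).toOuterMeasure s =
      ∑' a, p a * q.toOuterMeasure (Prod.mk a ⁻¹' s) := by
  change (p.bind fun a => q.map (Prod.mk a)).toOuterMeasure s = _
  simp only [toOuterMeasure_bind_apply, toOuterMeasure_map_apply]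

lemma toOuterMeasure_pair_and_fst (E : α × β → Prop) (C : α → Prop) :
    (do let a ← p; let b ← q; return (a, b) : PMF (α × β)).toOuterMeasure {x | E x ∧ C x.1} =
      ∑' a, {a | C a}.indicator (fun a => p a * q.toOuterMeasure {b | E (a, b)}) a := by
  rw [toOuterMeasure_pair_apply]
  refine tsum_congr fun a => ?_
  by_cases ha : C a <;> simp [ha, Set.preimage]

lemma toOuterMeasure_pair_fst (C : α → Prop) :
    (do let a ← p; let b ← q; return (a, b) : PMF (α × β)).toOuterMeasure {x | C x.1} =
      p.toOuterMeasure {a | C a} := by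
  rw [toOuterMeasure_pair_apply, toOuterMeasure_apply]
  refine tsum_congr fun a => ?_
  have hq : q.toOuterMeasure Set.univ = 1 :=
    (q.toOuterMeasure_apply_eq_one_iff _).2 (Set.subset_univ _)
  by_cases ha : C a <;> simp [ha, Set.preimage, hq]

end PMF

theorem cond_weight_mono_general (D : ℕ) (ε : ENNReal) (hε : ε ≤ 1 / 2)
    (μ : PMF (Fin D → ZMod 2)) (ν : PMF (Fin D → ZMod 2))
    (hν : ∀ e, ν e = ∏ i, (if e i = 1 then ε else 1 - ε))
    (u u' : ℕ)
    (P : PMF ((Fin D → ZMod 2) × (Fin D → ZMod 2)))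
    (hP : P = do
      let w ← μ
      let e ← ν
      return (w, e))
    (hle : 0 < P.toOuterMeasure {q | hammingNorm q.1 ≤ u}) :
    P.toOuterMeasure {q | hammingNorm (q.1 + q.2) ≤ u' ∧ hammingNorm q.1 = u}
        / P.toOuterMeasure {q | hammingNorm q.1 = u}
      ≤ P.toOuterMeasure {q | hammingNorm (q.1 + q.2) ≤ u' ∧ hammingNorm q.1 ≤ u}
        / P.toOuterMeasure {q | hammingNorm q.1 ≤ u} := by
  subst hP
  rw [PMF.toOuterMeasure_pair_fst μ ν (hammingNorm · ≤ u)] at hle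
  rw [PMF.toOuterMeasure_pair_and_fst μ ν _ (hammingNorm · = u),
    PMF.toOuterMeasure_pair_and_fst μ ν _ (hammingNorm · ≤ u),
    PMF.toOuterMeasure_pair_fst μ ν (hammingNorm · = u),
    PMF.toOuterMeasure_pair_fst μ ν (hammingNorm · ≤ u)]
  have hthreshold : Antitone fun n : ℕ => if n ≤ u' then (1 : ℝ≥0∞) else 0 :=
    fun m n hmn => by dsimp only; split_ifs <;> simp_all; omega
  have hf := toOuterMeasure_hammingNorm_add_le_eq_bscExpect ν hν (r := u')
  refine PMF.toOuterMeasure_tsum_indicator_mul_div_le μ _ (fun a ha b hb => ?_) hle.ne'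
  exact (hf a).trans_le ((bscExpect_antitone (ENNReal.le_one_sub_self_of_le_half hε) hthreshold
    (ha.symm ▸ hb)).trans_eq (hf b).symm)

/-- Let `W` have an arbitrary distribution `μ` on `{0,1}^D` and let `e` be an
independent i.i.d. Bernoulli(ε) vector, `0 < ε ≤ 1/2`.  If `Pr[wt(W) ≤ u] > 0` and
`Pr[wt(W) = u] > 0`, then
`Pr[wt(W+e) ≤ u' | wt(W) ≤ u] ≥ Pr[wt(W+e) ≤ u' | wt(W) = u]`. -/
theorem cond_weight_mono (D : ℕ) (ε : ENNReal) (hε0 : 0 < ε) (hε : ε ≤ 1 / 2)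
    (μ : PMF (Fin D → ZMod 2)) (ν : PMF (Fin D → ZMod 2))
    (hν : ∀ e, ν e = ∏ i, (if e i = 1 then ε else 1 - ε))
    (u u' : ℕ)
    (P : PMF ((Fin D → ZMod 2) × (Fin D → ZMod 2)))
    (hP : P = do
      let w ← μ
      let e ← ν
      return (w, e))
    (hle : 0 < P.toOuterMeasure {q | hammingNorm q.1 ≤ u})
    (heq : 0 < P.toOuterMeasure {q | hammingNorm q.1 = u}) :
    P.toOuterMeasure {q | hammingNorm (q.1 + q.2) ≤ u' ∧ hammingNorm q.1 = u}
        / P.toOuterMeasure {q | hammingNorm q.1 = u}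
      ≤ P.toOuterMeasure {q | hammingNorm (q.1 + q.2) ≤ u' ∧ hammingNorm q.1 ≤ u}
        / P.toOuterMeasure {q | hammingNorm q.1 ≤ u} :=
  cond_weight_mono_general D ε hε μ ν hν u u' P hP hle
end

section
/- Let 0 < ε' < 1/2 and let ε_1 satisfy (1 − (1 − 2ε')²)/2 < ε_1 < 1/2. Set γ = 1 − 2ε', δ_eps = 1 − 2ε_1, and c = (1 − δ_eps)/(γ² − δ_eps) + 1 (note γ² > δ_eps so c is well defined and positive). Let μ be any probability distribution on the set of vectors w ∈ {0,1}^D with wt(w) ≤ ε'·D, and let Δ^{(1)}, Δ^{(2)} be independent samples from μ. Then Pr[d(Δ^{(1)}, Δ^{(2)}) ≤ ε_1·D] ≥ 1/c². -/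
/-!
Write `χ : ZMod 2 → ℝ` for the sign `0 ↦ 1, 1 ↦ -1` and `sᵢ = 𝔼[χ aᵢ]` for `a ∼ μ`. For
independent `a, b ∼ μ` one has `n - 2 𝔼[d(a, b)] = ∑ᵢ sᵢ²` and `∑ᵢ sᵢ = n - 2 𝔼[wt a]`, so
Cauchy–Schwarz `(∑ᵢ sᵢ)² ≤ n ∑ᵢ sᵢ²` gives `𝔼[d(a, b)] ≤ 2ε'(1 - ε') n` when `wt ≤ ε' n`.
Markov's inequality then bounds `Pr[d(a, b) > ε₁ n]` by `x / ε₁` with `x = 2ε'(1 - ε')`, and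
since `γ² - δ = 2(ε₁ - x)`, the constant is `c = ε₁ / (ε₁ - x) + 1`, for which
`1 / c² ≤ 1 / c ≤ 1 - x / ε₁`.
-/

open Finset

lemma mul_sum_filter_lt_le_sum_mul {β : Type*} [Fintype β] {p f : β → ℝ}
    (hp : ∀ x, 0 ≤ p x) (hf : ∀ x, 0 ≤ f x) (t : ℝ) :
    t * ∑ x with t < f x, p x ≤ ∑ x, p x * f x := by
  rw [mul_sum]
  calc ∑ x with t < f x, t * p x ≤ ∑ x with t < f x, p x * f x :=
        sum_le_sum fun x hx => by
          rw [mul_comm]; exact mul_le_mul_of_nonneg_left (mem_filter.1 hx).2.le (hp x)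
    _ ≤ ∑ x, p x * f x :=
        sum_le_sum_of_subset_of_nonneg (filter_subset _ _) fun x _ _ => mul_nonneg (hp x) (hf x)

lemma one_div_sq_le_one_sub_div {x e : ℝ} (he : 0 < e) (hxe : x < e) :
    1 / (e / (e - x) + 1) ^ 2 ≤ 1 - x / e := by
  have hc : 1 ≤ e / (e - x) + 1 := le_add_of_nonneg_left (div_nonneg he.le (by linarith))
  calc 1 / (e / (e - x) + 1) ^ 2 ≤ 1 / (e / (e - x) + 1) :=
        one_div_le_one_div_of_le (by positivity) (le_self_pow₀ hc two_ne_zero)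
    _ = (e - x) / (2 * e - x) := by
        rw [div_add_one (by linarith), one_div_div]; ring_nf
    _ ≤ (e - x) / e := div_le_div_of_nonneg_left (by linarith) he (by linarith)
    _ = 1 - x / e := by field_simp

def pmSign (x : ZMod 2) : ℝ := if x = 0 then 1 else -1

lemma pmSign_neg_add (x y : ZMod 2) : pmSign (-x + y) = pmSign x * pmSign y := by
  obtain rfl | rfl : x = 0 ∨ x = 1 := by decide +revert
  all_goals obtain rfl | rfl : y = 0 ∨ y = 1 := by decide +revert
  all_goals norm_num [pmSign]

variable {ι : Type*} [Fintype ι]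

lemma sum_pmSign (a : ι → ZMod 2) :
    ∑ i, pmSign (a i) = Fintype.card ι - 2 * hammingNorm a := by
  classical
  have h (i : ι) : pmSign (a i) = 1 - 2 * if a i ≠ 0 then 1 else 0 := by
    by_cases h : a i = 0 <;> simp [pmSign, h]; norm_num
  simp only [h, sum_sub_distrib, ← mul_sum, sum_boole]
  simp [hammingNorm]

lemma sum_pmSign_mul_pmSign (a b : ι → ZMod 2) :
    ∑ i, pmSign (a i) * pmSign (b i) = Fintype.card ι - 2 * hammingDist a b := by
  simp only [← pmSign_neg_add, hammingDist_eq_hammingNorm, ← sum_pmSign, Pi.add_apply,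
    Pi.neg_apply]

theorem card_mul_sum_mul_hammingDist_le [DecidableEq ι] (q : (ι → ZMod 2) → ℝ)
    (hq : ∑ a, q a = 1) :
    Fintype.card ι * ∑ a, ∑ b, q a * q b * hammingDist a b ≤
      2 * (∑ a, q a * hammingNorm a) * (Fintype.card ι - ∑ a, q a * hammingNorm a) := by
  set n : ℝ := (Fintype.card ι : ℝ)
  set m := ∑ a, q a * hammingNorm a
  set E := ∑ a, ∑ b, q a * q b * hammingDist a b
  set s : ι → ℝ := fun i => ∑ a, q a * pmSign (a i)
  have sum_s : ∑ i, s i = n - 2 * m := by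
    calc ∑ i, s i = ∑ a, q a * (n - 2 * hammingNorm a) := by
          rw [sum_comm]; simp only [← mul_sum, sum_pmSign, n]
      _ = n - 2 * m := by
          simp only [mul_sub, sum_sub_distrib, ← sum_mul, hq, one_mul, m, mul_sum,
            mul_left_comm _ (2 : ℝ)]
  have sum_sq_s : ∑ i, s i ^ 2 = n - 2 * E := by
    calc ∑ i, s i ^ 2 = ∑ i, ∑ a, ∑ b, q a * pmSign (a i) * (q b * pmSign (b i)) := by
          simp only [s, sq, sum_mul_sum]
      _ = ∑ a, ∑ b, ∑ i, q a * pmSign (a i) * (q b * pmSign (b i)) := by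
          rw [sum_comm]; exact sum_congr rfl fun _ _ => sum_comm
      _ = ∑ a, ∑ b, q a * q b * ∑ i, pmSign (a i) * pmSign (b i) := by
          simp only [mul_sum]; exact sum_congr rfl fun _ _ => sum_congr rfl fun _ _ =>
            sum_congr rfl fun _ _ => by ring
      _ = n - 2 * E := by
          simp only [sum_pmSign_mul_pmSign, mul_sub, sum_sub_distrib, ← sum_mul, ← mul_sum, hq,
            E, n]
          simp only [mul_sum, mul_left_comm _ (2 : ℝ), one_mul]
  have cauchy_schwarz : (∑ i, s i) ^ 2 ≤ n * ∑ i, s i ^ 2 := by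
    simpa using sq_sum_le_card_mul_sum_sq (s := univ) (f := s)
  rw [sum_s, sum_sq_s] at cauchy_schwarz
  nlinarith

namespace PMF

variable {α : Type*} [Fintype α] (μ : PMF α)

lemma sum_toReal : ∑ a, (μ a).toReal = 1 := by
  rw [← ENNReal.toReal_sum fun a _ => μ.apply_ne_top a, ← tsum_fintype (L := .unconditional _),
    μ.tsum_coe, ENNReal.toReal_one]

lemma sum_toReal_mul_le {f : α → ℝ} {w : ℝ} (h : ∀ a, μ a ≠ 0 → f a ≤ w) :
    ∑ a, (μ a).toReal * f a ≤ w := by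
  calc ∑ a, (μ a).toReal * f a ≤ ∑ a, (μ a).toReal * w := by
        refine sum_le_sum fun a _ => ?_
        by_cases ha : μ a = 0
        · simp [ha]
        · exact mul_le_mul_of_nonneg_left (h a ha) ENNReal.toReal_nonneg
    _ = w := by rw [← sum_mul, μ.sum_toReal, one_mul]

noncomputable def iidPair : PMF (α × α) := do
  let a ← μ
  let b ← μ
  return (a, b)

lemma iidPair_apply (x : α × α) : μ.iidPair x = μ x.1 * μ x.2 := by
  classical
  change (μ.bind fun a => μ.bind fun b => PMF.pure (a, b)) x = _
  simp [PMF.bind_apply, PMF.pure_apply, tsum_fintype, Prod.ext_iff, ite_and, eq_comm (a := x.1)]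

lemma toReal_iidPair_toOuterMeasure (p : α × α → Prop) [DecidablePred p] :
    (μ.iidPair.toOuterMeasure {x | p x}).toReal =
      ∑ x with p x, (μ x.1).toReal * (μ x.2).toReal := by
  rw [show {x | p x} = ((univ.filter p : Finset (α × α)) : Set (α × α)) by simp,
    toOuterMeasure_apply_finset, ENNReal.toReal_sum fun x _ => by
      rw [iidPair_apply]; exact ENNReal.mul_ne_top (μ.apply_ne_top _) (μ.apply_ne_top _)]
  simp only [iidPair_apply, ENNReal.toReal_mul]

end PMF

theorem PMF.card_mul_mul_one_sub_toReal_iidPair_le [DecidableEq ι] (μ : PMF (ι → ZMod 2))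
    {w : ℝ} (hw : ∀ a, μ a ≠ 0 → (hammingNorm a : ℝ) ≤ w) (hwn : w ≤ Fintype.card ι / 2) (t : ℝ) :
    Fintype.card ι * t *
        (1 - (μ.iidPair.toOuterMeasure {x | (hammingDist x.1 x.2 : ℝ) ≤ t}).toReal) ≤
      2 * w * (Fintype.card ι - w) := by
  set n : ℝ := (Fintype.card ι : ℝ)
  set q : (ι → ZMod 2) → ℝ := fun a => (μ a).toReal
  set m := ∑ a, q a * hammingNorm a
  set E := ∑ a, ∑ b, q a * q b * hammingDist a b
  have hmw : m ≤ w := μ.sum_toReal_mul_le hw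
  set P := (μ.iidPair.toOuterMeasure {x | (hammingDist x.1 x.2 : ℝ) ≤ t}).toReal with hP
  have far : 1 - P = ∑ x : (ι → ZMod 2) × (ι → ZMod 2) with t < hammingDist x.1 x.2,
      q x.1 * q x.2 := by
    have total : ∑ x : (ι → ZMod 2) × (ι → ZMod 2), q x.1 * q x.2 = 1 := by
      rw [Fintype.sum_prod_type, ← sum_mul_sum, μ.sum_toReal, one_mul]
    rw [hP, μ.toReal_iidPair_toOuterMeasure, ← total, ← sum_filter_add_sum_filter_not univ
      (fun x => (hammingDist x.1 x.2 : ℝ) ≤ t)]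
    simp only [not_le]
    exact add_sub_cancel_left _ _
  have markov : t * (1 - P) ≤ E := by
    rw [far]
    refine (mul_sum_filter_lt_le_sum_mul
      (fun _ => mul_nonneg ENNReal.toReal_nonneg ENNReal.toReal_nonneg)
      (fun _ => Nat.cast_nonneg _) t).trans_eq ?_
    rw [Fintype.sum_prod_type]
  calc n * t * (1 - P) = n * (t * (1 - P)) := mul_assoc _ _ _
    _ ≤ n * E := mul_le_mul_of_nonneg_left markov (Nat.cast_nonneg _)
    _ ≤ 2 * m * (n - m) := card_mul_sum_mul_hammingDist_le q μ.sum_toReal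
    _ ≤ 2 * w * (n - w) := by
      -- `w (n - w) - m (n - m) = (w - m) (n - w - m)`
      nlinarith [mul_nonneg (sub_nonneg.2 hmw) (show 0 ≤ n - w - m by linarith)]

theorem PMF.one_sub_div_le_toReal_iidPair_toOuterMeasure [DecidableEq ι]
    (μ : PMF (ι → ZMod 2)) {ε' ε1 : ℝ} (hε'0 : 0 ≤ ε') (hε' : ε' ≤ 1 / 2) (hε1 : 0 < ε1)
    (hμ : ∀ a, μ a ≠ 0 → (hammingNorm a : ℝ) ≤ ε' * Fintype.card ι) :
    1 - 2 * ε' * (1 - ε') / ε1 ≤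
      (μ.iidPair.toOuterMeasure {x | (hammingDist x.1 x.2 : ℝ) ≤ ε1 * Fintype.card ι}).toReal := by
  have hx0 : 0 ≤ 2 * ε' * (1 - ε') := mul_nonneg (by linarith) (by linarith)
  rcases (Fintype.card ι).eq_zero_or_pos with hι | hι
  · have : IsEmpty ι := Fintype.card_eq_zero_iff.1 hι
    rw [(toOuterMeasure_apply_eq_one_iff _ _).2 fun x _ => by simp [Subsingleton.elim x.1 x.2],
      ENNReal.toReal_one, sub_le_self_iff]
    exact div_nonneg hx0 hε1.le
  · have h := μ.card_mul_mul_one_sub_toReal_iidPair_le hμ (by nlinarith) (ε1 * Fintype.card ι)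
    have hn2 : (0 : ℝ) < (Fintype.card ι : ℝ) ^ 2 := by positivity
    rw [sub_le_comm, le_div_iff₀ hε1]
    refine le_of_mul_le_mul_left ?_ hn2
    linarith

theorem johnson_bound_pairs_general (D : ℕ) (ε' ε1 : ℝ)
    (hε'0 : 0 < ε') (hε' : ε' < 1 / 2)
    (hε1l : (1 - (1 - 2 * ε') ^ 2) / 2 < ε1)
    (γ δeps c : ℝ) (hγ : γ = 1 - 2 * ε') (hδ : δeps = 1 - 2 * ε1)
    (hc : c = (1 - δeps) / (γ ^ 2 - δeps) + 1)
    (μ : PMF (Fin D → ZMod 2))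
    (hμ : ∀ w, μ w ≠ 0 → (hammingNorm w : ℝ) ≤ ε' * D) :
    ENNReal.ofReal (1 / c ^ 2) ≤
      ((do
        let a ← μ
        let b ← μ
        return (a, b)) : PMF ((Fin D → ZMod 2) × (Fin D → ZMod 2))).toOuterMeasure
        {q | (hammingDist q.1 q.2 : ℝ) ≤ ε1 * D} := by
  change _ ≤ μ.iidPair.toOuterMeasure _
  set x := 2 * ε' * (1 - ε')
  have hxε1 : x < ε1 := by linarith [show (1 - (1 - 2 * ε') ^ 2) / 2 = x by ring]
  have hε1 : 0 < ε1 := by nlinarith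
  have hc' : c = ε1 / (ε1 - x) + 1 := by
    rw [hc, hδ, hγ, show (1 - 2 * ε') ^ 2 - (1 - 2 * ε1) = 2 * (ε1 - x) by ring,
      show 1 - (1 - 2 * ε1) = 2 * ε1 by ring, mul_div_mul_left _ _ two_ne_zero]
  have close := μ.one_sub_div_le_toReal_iidPair_toOuterMeasure hε'0.le hε'.le hε1
    (by simpa using hμ)
  simp only [Fintype.card_fin] at close
  rw [ENNReal.ofReal_le_iff_le_toReal (by
    rw [PMF.toOuterMeasure_apply]; exact PMF.tsum_coe_indicator_ne_top _ _), hc']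
  exact (one_div_sq_le_one_sub_div hε1 hxε1).trans close

/-- Johnson-bound claim: Let `0 < ε' < 1/2` and
`(1 − (1 − 2ε')²)/2 < ε₁ < 1/2`; set `γ = 1 − 2ε'`, `δ_eps = 1 − 2ε₁` and
`c = (1 − δ_eps)/(γ² − δ_eps) + 1`.  If `μ` is any distribution on vectors of `{0,1}^D`
of Hamming weight at most `ε'·D` and `Δ⁽¹⁾, Δ⁽²⁾` are independent samples from `μ`, then
`Pr[d(Δ⁽¹⁾, Δ⁽²⁾) ≤ ε₁·D] ≥ 1/c²`. -/
theorem johnson_bound_pairs (D : ℕ) (ε' ε1 : ℝ)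
    (hε'0 : 0 < ε') (hε' : ε' < 1 / 2)
    (hε1l : (1 - (1 - 2 * ε') ^ 2) / 2 < ε1) (hε1 : ε1 < 1 / 2)
    (γ δeps c : ℝ) (hγ : γ = 1 - 2 * ε') (hδ : δeps = 1 - 2 * ε1)
    (hc : c = (1 - δeps) / (γ ^ 2 - δeps) + 1)
    (μ : PMF (Fin D → ZMod 2))
    (hμ : ∀ w, μ w ≠ 0 → (hammingNorm w : ℝ) ≤ ε' * D) :
    ENNReal.ofReal (1 / c ^ 2) ≤
      ((do
        let a ← μ
        let b ← μ
        return (a, b)) : PMF ((Fin D → ZMod 2) × (Fin D → ZMod 2))).toOuterMeasure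
        {q | (hammingDist q.1 q.2 : ℝ) ≤ ε1 * D} :=
  johnson_bound_pairs_general D ε' ε1 hε'0 hε' hε1l γ δeps c hγ hδ hc μ hμ
end
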